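/- arXiv:2106.08855 — 6 statements merged into one kernel-verified Lean document; each statement's English description precedes it below -/
import Mathlib

section
/- Let A and B be nonnegative selfadjoint bounded linear operators on a complex Hilbert space and let r ∈ (0, 1] be a real number. Then ‖A^r − B^r‖ ≤ ‖A − B‖^r. -/
/-!
Since `a - b ≤ ‖a - b‖`, we have `a ≤ b + ‖a - b‖`. Operator monotonicity of `x ↦ x ^ r` for
`r ∈ [0, 1]` (Löwner–Heinz) gives `a ^ r ≤ (b + ‖a - b‖) ^ r`, and since the scalar commutes with
`b`, the functional calculus turns the numerical inequality `(x + c) ^ r ≤ x ^ r + c ^ r` into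
`(b + ‖a - b‖) ^ r ≤ b ^ r + ‖a - b‖ ^ r`. Together with the same bound with `a` and `b` exchanged,
the selfadjoint element `a ^ r - b ^ r` lies between `-‖a - b‖ ^ r` and `‖a - b‖ ^ r`.
-/

open scoped NNReal

namespace CFC

variable {A : Type*} [CStarAlgebra A] [PartialOrder A] [StarOrderedRing A]

lemma rpow_add_algebraMap_le {a : A} (ha : 0 ≤ a) (c : ℝ≥0) {r : ℝ} (hr0 : 0 ≤ r)
    (hr1 : r ≤ 1) : (a + algebraMap ℝ≥0 A c) ^ r ≤ a ^ r + algebraMap ℝ≥0 A (c ^ r) := by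
  have hcont : Continuous (fun x : ℝ≥0 => x ^ r) := NNReal.continuous_rpow_const hr0
  calc (a + algebraMap ℝ≥0 A c) ^ r = cfc (fun x : ℝ≥0 => (x + c) ^ r) a := by
        rw [rpow_def, cfc_comp' (fun x : ℝ≥0 => x ^ r) (· + c) a, cfc_add_const c (fun x => x) a,
          cfc_id' ℝ≥0 a]
    _ ≤ cfc (fun x : ℝ≥0 => x ^ r + c ^ r) a :=
        cfc_mono fun x _ => NNReal.rpow_add_le_add_rpow x c hr0 hr1
    _ = a ^ r + algebraMap ℝ≥0 A (c ^ r) := cfc_add_const _ _ a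

lemma _root_.IsSelfAdjoint.nnnorm_le_of_neg_le_of_le {x : A} (hx : IsSelfAdjoint x) {t : ℝ≥0}
    (hlow : -algebraMap ℝ≥0 A t ≤ x) (hupp : x ≤ algebraMap ℝ≥0 A t) : ‖x‖₊ ≤ t := by
  rw [IsScalarTower.algebraMap_apply ℝ≥0 ℝ A] at hlow hupp
  rw [← map_neg, algebraMap_le_iff_le_spectrum] at hlow
  rw [le_algebraMap_iff_spectrum_le] at hupp
  rw [← cfc_id' ℝ x]
  refine nnnorm_cfc_le t fun y hy => ?_
  rw [← NNReal.coe_le_coe, coe_nnnorm, Real.norm_eq_abs, abs_le]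
  exact ⟨hlow y hy, hupp y hy⟩

lemma rpow_sub_rpow_le_algebraMap {a b : A} (ha : 0 ≤ a) (hb : 0 ≤ b) {r : ℝ}
    (hr0 : 0 ≤ r) (hr1 : r ≤ 1) : a ^ r - b ^ r ≤ algebraMap ℝ≥0 A (‖a - b‖₊ ^ r) := by
  have hab : a ≤ b + algebraMap ℝ≥0 A ‖a - b‖₊ := by
    have := (IsSelfAdjoint.of_nonneg ha |>.sub (.of_nonneg hb)).le_algebraMap_norm_self
    rw [IsScalarTower.algebraMap_apply ℝ≥0 ℝ A]
    exact sub_le_iff_le_add'.mp this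
  rw [sub_le_iff_le_add']
  calc a ^ r ≤ (b + algebraMap ℝ≥0 A ‖a - b‖₊) ^ r := rpow_le_rpow ⟨hr0, hr1⟩ hab
    _ ≤ _ := rpow_add_algebraMap_le hb _ hr0 hr1

lemma nnnorm_rpow_sub_rpow_le {a b : A} (ha : 0 ≤ a) (hb : 0 ≤ b) {r : ℝ}
    (hr0 : 0 ≤ r) (hr1 : r ≤ 1) : ‖a ^ r - b ^ r‖₊ ≤ ‖a - b‖₊ ^ r := by
  refine (IsSelfAdjoint.of_nonneg rpow_nonneg |>.sub (.of_nonneg rpow_nonneg))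
    |>.nnnorm_le_of_neg_le_of_le ?_ (rpow_sub_rpow_le_algebraMap ha hb hr0 hr1)
  rw [neg_le, neg_sub, ← nnnorm_neg, neg_sub]
  exact rpow_sub_rpow_le_algebraMap hb ha hr0 hr1

end CFC

theorem norm_rpow_sub_rpow_le_of_le_one_general
    {H : Type*} [NormedAddCommGroup H] [InnerProductSpace ℂ H] [CompleteSpace H]
    (A B : H →L[ℂ] H)
    (hA0 : 0 ≤ A) (hB0 : 0 ≤ B)
    (r : ℝ) (hr0 : 0 < r) (hr1 : r ≤ 1) :
    ‖CFC.rpow A r - CFC.rpow B r‖ ≤ ‖A - B‖ ^ r := by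
  exact_mod_cast CFC.nnnorm_rpow_sub_rpow_le hA0 hB0 hr0.le hr1

/-- **Hermitian operator inequality, case `0 < r ≤ 1`** (operator Hölder continuity of
fractional powers): for nonnegative selfadjoint bounded operators `A, B` on a complex
Hilbert space and any real `r ∈ (0, 1]`, `‖A^r − B^r‖ ≤ ‖A − B‖^r`. -/
theorem norm_rpow_sub_rpow_le_of_le_one
    {H : Type*} [NormedAddCommGroup H] [InnerProductSpace ℂ H] [CompleteSpace H]
    (A B : H →L[ℂ] H) (hA : IsSelfAdjoint A) (hB : IsSelfAdjoint B)
    (hA0 : 0 ≤ A) (hB0 : 0 ≤ B)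
    (r : ℝ) (hr0 : 0 < r) (hr1 : r ≤ 1) :
    ‖CFC.rpow A r - CFC.rpow B r‖ ≤ ‖A - B‖ ^ r :=
  norm_rpow_sub_rpow_le_of_le_one_general A B hA0 hB0 r hr0 hr1
end

section
/- Let A and B be nonnegative selfadjoint bounded linear operators on a complex Hilbert space and let r ∈ (0, 1] be a real number. Then ‖A^r B^r‖ ≤ ‖A B‖^r (Cordes inequality). -/
open scoped NNReal
open Set

/-! Heinz's argument. Since `‖a b‖² = ‖b a² b‖`, the bound `‖a b‖ ≤ c` says `b a² b ≤ c²`, which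
for invertible `b` is `a² ≤ c² b⁻²`. Operator monotonicity of `t ↦ t ^ r` for `r ∈ [0, 1]`
(Löwner–Heinz) turns this into `a^(2r) ≤ c^(2r) b^(-2r)`, that is `‖a^r b^r‖ ≤ c^r`. A general
`b ≥ 0` is the limit of the invertible `b + ε`, and both sides are continuous in `ε`. -/

namespace CFC

variable {A : Type*} [CStarAlgebra A] [PartialOrder A] [StarOrderedRing A]

lemma smul_rpow (c : ℝ≥0) (a : A) {y : ℝ} (hy : 0 ≤ y) (ha : 0 ≤ a := by cfc_tac) :
    (c • a) ^ y = c ^ y • a ^ y := by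
  rw [rpow_def, rpow_def, ← cfc_comp_smul c (· ^ y) a, ← cfc_smul (c ^ y) (· ^ y) a]
  exact cfc_congr fun x _ ↦ NNReal.mul_rpow

lemma mul_self_rpow (a : A) {r : ℝ} (hr : 0 ≤ r) (ha : 0 ≤ a := by cfc_tac) :
    (a * a) ^ r = a ^ r * a ^ r := by
  have hsq : ∀ x : A, 0 ≤ x → x * x = x ^ (2 : ℝ) := fun x hx ↦ by
    rw [← pow_two, ← rpow_natCast x 2, Nat.cast_ofNat]
  rw [hsq a ha, hsq _ rpow_nonneg, rpow_rpow_of_exponent_nonneg a _ _ zero_le_two hr,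
    rpow_rpow_of_exponent_nonneg a _ _ hr zero_le_two, mul_comm]

lemma rpow_mul_rpow_mul_rpow {b : A} (hb : IsStrictlyPositive b) {s t u : ℝ} (h : s + t + u = 0) :
    b ^ s * b ^ t * b ^ u = 1 := by
  rw [← rpow_add hb.isUnit, ← rpow_add hb.isUnit, h, rpow_zero b]

lemma rpow_neg_mul_rpow_conj {b : A} (hb : IsStrictlyPositive b) (s : ℝ) (x : A) :
    b ^ (-s) * (b ^ s * x * b ^ s) * b ^ (-s) = x := by
  simp only [← mul_assoc, rpow_neg_mul_rpow s hb, one_mul]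
  rw [mul_assoc, rpow_mul_rpow_neg s hb, mul_one]

lemma rpow_conj_le_rpow_conj_iff {b : A} (hb : IsStrictlyPositive b) (s : ℝ) {x y : A} :
    b ^ s * x * b ^ s ≤ b ^ s * y * b ^ s ↔ x ≤ y :=
  ⟨fun h ↦ by simpa only [rpow_neg_mul_rpow_conj hb] using
      conjugate_le_conjugate_of_nonneg h (rpow_nonneg (a := b) (y := -s)),
    fun h ↦ conjugate_le_conjugate_of_nonneg h rpow_nonneg⟩

lemma rpow_conj_le_algebraMap_iff {b : A} (hb : IsStrictlyPositive b) (s : ℝ) (c : ℝ≥0)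
    (x : A) : b ^ s * x * b ^ s ≤ algebraMap ℝ≥0 A c ↔ x ≤ c • b ^ (-2 * s) := by
  have hc : algebraMap ℝ≥0 A c = b ^ s * (c • b ^ (-2 * s)) * b ^ s := by
    rw [mul_smul_comm, smul_mul_assoc, rpow_mul_rpow_mul_rpow hb (by ring),
      Algebra.algebraMap_eq_smul_one]
  rw [hc, rpow_conj_le_rpow_conj_iff hb s]

lemma nnnorm_mul_le_iff {a b : A} (ha : IsSelfAdjoint a) (hb : IsSelfAdjoint b) (c : ℝ≥0) :
    ‖a * b‖₊ ≤ c ↔ b * (a * a) * b ≤ algebraMap ℝ≥0 A (c ^ 2) := by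
  have hstar : star (a * b) * (a * b) = b * (a * a) * b := by
    rw [star_mul, ha.star_eq, hb.star_eq]; noncomm_ring
  rw [← hstar, ← CStarAlgebra.nnnorm_le_iff_of_nonneg _ _ (star_mul_self_nonneg _),
    CStarRing.nnnorm_star_mul_self, ← pow_two, pow_le_pow_iff_left₀ zero_le zero_le two_ne_zero]

lemma nnnorm_rpow_mul_rpow_le_of_isStrictlyPositive {a b : A} (ha : 0 ≤ a)
    (hb : IsStrictlyPositive b) {r : ℝ} (hr : r ∈ Icc 0 1) :
    ‖a ^ r * b ^ r‖₊ ≤ ‖a * b‖₊ ^ r := by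
  set c := ‖a * b‖₊
  have hsq : a * a ≤ (c ^ 2) • b ^ (-2 : ℝ) := by
    have h := (nnnorm_mul_le_iff ha.isSelfAdjoint hb.isSelfAdjoint c).1 le_rfl
    rwa [← rpow_one b, rpow_conj_le_algebraMap_iff hb, mul_one] at h
  have hsq_r : a ^ r * a ^ r ≤ ((c ^ r) ^ 2) • b ^ (-2 * r) := by
    calc a ^ r * a ^ r = (a * a) ^ r := (mul_self_rpow a hr.1).symm
      _ ≤ ((c ^ 2) • b ^ (-2 : ℝ)) ^ r := rpow_le_rpow hr hsq
      _ = ((c ^ r) ^ 2) • b ^ (-2 * r) := by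
        rw [smul_rpow _ _ hr.1, rpow_rpow b _ _ (by norm_num) hb, ← NNReal.rpow_natCast_mul,
          ← NNReal.rpow_mul_natCast, mul_comm r]
  rw [nnnorm_mul_le_iff rpow_nonneg.isSelfAdjoint rpow_nonneg.isSelfAdjoint,
    rpow_conj_le_algebraMap_iff hb]
  exact hsq_r

lemma _root_.Continuous.cfc_rpow_const {X : Type*} [TopologicalSpace X] {f : X → A}
    (hf : Continuous f) (hf0 : ∀ x, 0 ≤ f x) {r : ℝ} (hr : 0 ≤ r) :
    Continuous fun x ↦ f x ^ r :=
  hf.cfc_nnreal_of_mem_nhdsSet (· ^ r) Filter.univ_mem hf0 (NNReal.continuous_rpow_const hr).continuousOn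

lemma nnnorm_rpow_mul_rpow_le {a b : A} (ha : 0 ≤ a) (hb : 0 ≤ b) {r : ℝ} (hr : r ∈ Icc 0 1) :
    ‖a ^ r * b ^ r‖₊ ≤ ‖a * b‖₊ ^ r := by
  set b' : ℝ≥0 → A := fun ε ↦ b + algebraMap ℝ≥0 A ε
  have hb' : Continuous b' := continuous_const.add (algebraMapCLM ℝ≥0 A).continuous
  have hb'_nonneg (ε : ℝ≥0) : 0 ≤ b' ε := add_nonneg hb (algebraMap_nonneg A (zero_le (a := ε)))
  have hb'_pos (ε : ℝ≥0) (hε : 0 < ε) : IsStrictlyPositive (b' ε) :=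
    (isStrictlyPositive_algebraMap hε).nonneg_add hb
  have hlhs : Continuous fun ε ↦ ‖a ^ r * b' ε ^ r‖₊ :=
    continuous_nnnorm.comp (continuous_const.mul (hb'.cfc_rpow_const hb'_nonneg hr.1))
  have hrhs : Continuous fun ε ↦ ‖a * b' ε‖₊ ^ r :=
    (NNReal.continuous_rpow_const hr.1).comp (continuous_nnnorm.comp (continuous_const.mul hb'))
  have hle := ContinuousWithinAt.closure_le (s := Ioi 0) (x := 0) (by simp [closure_Ioi])
    hlhs.continuousWithinAt hrhs.continuousWithinAt
    fun ε hε ↦ nnnorm_rpow_mul_rpow_le_of_isStrictlyPositive ha (hb'_pos ε hε) hr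
  simpa [b'] using hle

end CFC

theorem norm_rpow_mul_rpow_le_general
    {H : Type*} [NormedAddCommGroup H] [InnerProductSpace ℂ H] [CompleteSpace H]
    (A B : H →L[ℂ] H)
    (hA0 : 0 ≤ A) (hB0 : 0 ≤ B)
    (r : ℝ) (hr0 : 0 < r) (hr1 : r ≤ 1) :
    ‖CFC.rpow A r * CFC.rpow B r‖ ≤ ‖A * B‖ ^ r := by
  have h := CFC.nnnorm_rpow_mul_rpow_le hA0 hB0 ⟨hr0.le, hr1⟩
  rwa [← NNReal.coe_le_coe, NNReal.coe_rpow, coe_nnnorm, coe_nnnorm] at h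

/-- **Cordes inequality**: for nonnegative selfadjoint bounded operators `A, B` on a
complex Hilbert space and any real `r ∈ (0, 1]`, `‖A^r B^r‖ ≤ ‖A B‖^r`. -/
theorem norm_rpow_mul_rpow_le
    {H : Type*} [NormedAddCommGroup H] [InnerProductSpace ℂ H] [CompleteSpace H]
    (A B : H →L[ℂ] H) (hA : IsSelfAdjoint A) (hB : IsSelfAdjoint B)
    (hA0 : 0 ≤ A) (hB0 : 0 ≤ B)
    (r : ℝ) (hr0 : 0 < r) (hr1 : r ≤ 1) :
    ‖CFC.rpow A r * CFC.rpow B r‖ ≤ ‖A * B‖ ^ r :=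
  norm_rpow_mul_rpow_le_general A B hA0 hB0 r hr0 hr1
end

section
/- Let r > 1 be a real number and let b_n := ((−1)^n / n!) · ∏_{k=1}^{n} (r − k) be the n-th Taylor coefficient of the function x ↦ (1 − x)^{r−1} at 0. Then for every natural number N, ∑_{n=0}^{N} |b_n| ≤ 2^(⌊r⌋ + 1), where ⌊r⌋ denotes the integer part of r; equivalently, ∑_{n=0}^{N} (1/n!) · ∏_{k=1}^{n} |r − k| ≤ 2^(⌊r⌋ + 1). -/
/-!
Write `s = r - 1`, so that `b n = (-1)^n · choose s n` and the claim bounds `∑ |choose s n|`.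
Pascal's rule `choose (s + 1) (n + 1) = choose s n + choose s (n + 1)` and the triangle inequality
show that raising `s` by one at most doubles every partial sum of `|choose s n|`. This reduces
everything to `0 ≤ s ≤ 1`, where `choose s (n + 1)` and `choose (s - 1) n` both have sign `(-1)^n`;
then Pascal's rule has no cancellation and yields the exact telescoping identity
`∑_{n ≤ N} |choose s n| + |choose (s - 1) N| = 2`.
-/

open Finset

open Polynomial in
theorem Ring.choose_eq_prod_div {R : Type*} [Field R] [CharZero R] (a : R) (n : ℕ) :
    Ring.choose a n = (∏ j ∈ range n, (a - j)) / n.factorial := by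
  rw [Ring.choose_eq_smul, ← descPochhammer_eval_eq_prod_range, ← aeval_eq_smeval, aeval_def,
    eval₂_eq_eval_map, descPochhammer_map, smul_eq_mul, inv_mul_eq_div]

theorem Ring.choose_sub_one_eq_prod_Icc {R : Type*} [Field R] [CharZero R] (r : R) (n : ℕ) :
    Ring.choose (r - 1) n = (∏ k ∈ Icc 1 n, (r - k)) / n.factorial := by
  rw [Ring.choose_eq_prod_div, ← Ico_add_one_right_eq_Icc, range_eq_Ico, ← prod_Ico_add' _ 0 n 1]
  congr 1
  refine prod_congr (by simp) fun j _ => ?_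
  push_cast
  ring

theorem Ring.choose_add_one_succ {R : Type*} [Field R] [CharZero R] (a : R) (n : ℕ) :
    Ring.choose (a + 1) (n + 1) = (a + 1) / (n + 1) * Ring.choose a n := by
  simp only [Ring.choose_eq_prod_div, prod_range_succ', Nat.factorial_succ, Nat.cast_mul,
    Nat.cast_succ, Nat.cast_zero, sub_zero, add_sub_add_right_eq_sub]
  field_simp

theorem sum_range_abs_choose_add_one_le {R : Type*} [CommRing R] [LinearOrder R]
    [IsStrictOrderedRing R] [BinomialRing R] (s : R) (N : ℕ) :
    ∑ n ∈ range N, |Ring.choose (s + 1) n| ≤ 2 * ∑ n ∈ range N, |Ring.choose s n| := by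
  rcases N with _ | N
  · simp
  calc ∑ n ∈ range (N + 1), |Ring.choose (s + 1) n|
      = ∑ n ∈ range N, |Ring.choose (s + 1) (n + 1)| + |Ring.choose s 0| := by
        rw [sum_range_succ', Ring.choose_zero_right, Ring.choose_zero_right]
    _ ≤ ∑ n ∈ range N, (|Ring.choose s n| + |Ring.choose s (n + 1)|) + |Ring.choose s 0| := by
        gcongr with n
        exact Ring.choose_succ_succ s n ▸ abs_add_le _ _
    _ = ∑ n ∈ range N, |Ring.choose s n| + ∑ n ∈ range (N + 1), |Ring.choose s n| := by
        rw [sum_add_distrib, add_assoc, sum_range_succ' _ N]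
    _ ≤ 2 * ∑ n ∈ range (N + 1), |Ring.choose s n| := by
        rw [sum_range_succ _ N]
        linarith [abs_nonneg (Ring.choose s N)]

section OrderedField

variable {R : Type*} [Field R] [LinearOrder R] [IsStrictOrderedRing R]

theorem abs_eq_neg_one_pow_mul_of_nonneg {x : R} {n : ℕ} (h : 0 ≤ (-1) ^ n * x) :
    |x| = (-1) ^ n * x := by
  rw [← abs_of_nonneg h, abs_mul, abs_neg_one_pow, one_mul]

theorem Ring.neg_one_pow_mul_choose_nonneg {a : R} (ha : a ≤ 0) (n : ℕ) :
    0 ≤ (-1) ^ n * Ring.choose a n := by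
  rw [Ring.choose_eq_prod_div, mul_div_assoc']
  nth_rw 1 [← card_range n]
  rw [← prod_neg]
  exact div_nonneg (prod_nonneg fun j _ => by have := j.cast_nonneg (α := R); linarith)
    (by positivity)

theorem Ring.neg_one_pow_mul_choose_succ_nonneg {s : R} (h0 : 0 ≤ s) (h1 : s ≤ 1) (n : ℕ) :
    0 ≤ (-1) ^ n * Ring.choose s (n + 1) := by
  have h := Ring.choose_add_one_succ (s - 1) n
  rw [sub_add_cancel] at h
  rw [h, mul_left_comm]
  exact mul_nonneg (by positivity) (Ring.neg_one_pow_mul_choose_nonneg (by linarith) n)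

theorem sum_range_abs_choose_add_abs_choose_sub_one {s : R} (h0 : 0 ≤ s) (h1 : s ≤ 1) (N : ℕ) :
    ∑ n ∈ range (N + 1), |Ring.choose s n| + |Ring.choose (s - 1) N| = 2 := by
  induction N with
  | zero => norm_num
  | succ N ih =>
    have pascal := Ring.choose_succ_succ (s - 1) N
    rw [sub_add_cancel] at pascal
    have abs_pred (n : ℕ) := abs_eq_neg_one_pow_mul_of_nonneg
      (Ring.neg_one_pow_mul_choose_nonneg (a := s - 1) (by linarith) n)
    rw [sum_range_succ, ← ih, abs_pred, abs_pred,
      abs_eq_neg_one_pow_mul_of_nonneg (Ring.neg_one_pow_mul_choose_succ_nonneg h0 h1 N), pascal,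
      pow_succ]
    ring

theorem sum_range_abs_choose_le_two {s : R} (h0 : 0 ≤ s) (h1 : s ≤ 1) (N : ℕ) :
    ∑ n ∈ range N, |Ring.choose s n| ≤ 2 := by
  rcases N with _ | N
  · simp
  · linarith [sum_range_abs_choose_add_abs_choose_sub_one h0 h1 N,
      abs_nonneg (Ring.choose (s - 1) N)]

theorem sum_range_abs_choose_le_two_pow {s : R} (h0 : 0 ≤ s) {m : ℕ} (hs : s ≤ m + 1) (N : ℕ) :
    ∑ n ∈ range N, |Ring.choose s n| ≤ 2 ^ (m + 1) := by
  induction m generalizing s with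
  | zero => simpa using sum_range_abs_choose_le_two h0 (by simpa using hs) N
  | succ m ih =>
    by_cases h1 : s ≤ 1
    · calc ∑ n ∈ range N, |Ring.choose s n| ≤ 2 := sum_range_abs_choose_le_two h0 h1 N
        _ ≤ 2 ^ (m + 1 + 1) := le_self_pow₀ one_le_two (by omega)
    · have doubling := sum_range_abs_choose_add_one_le (s - 1) N
      rw [sub_add_cancel] at doubling
      have ih_pred := ih (s := s - 1) (by linarith) (by push_cast at hs; linarith)
      rw [pow_succ']
      linarith

end OrderedField

/-- **Bound on the partial sums of the binomial-series coefficients of `(1 − x)^{r−1}`**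
(inside the paper's Lemma on Hermitian operator inequalities, case `r > 1`):
with `b n = ((−1)^n / n!) · ∏_{k=1}^{n} (r − k)`, for every `N`,
`∑_{n=0}^{N} |b n| ≤ 2^(⌊r⌋ + 1)`; equivalently,
`∑_{n=0}^{N} (1/n!) · ∏_{k=1}^{n} |r − k| ≤ 2^(⌊r⌋ + 1)`. -/
theorem sum_abs_binomial_coeff_le (r : ℝ) (hr : 1 < r)
    (b : ℕ → ℝ)
    (hb : ∀ n, b n = ((-1 : ℝ) ^ n / n.factorial) * ∏ k ∈ Icc 1 n, (r - k))
    (N : ℕ) :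
    (∑ n ∈ range (N + 1), |b n| ≤ 2 ^ (⌊r⌋ + 1)) ∧
      (∑ n ∈ range (N + 1), (1 / (n.factorial : ℝ)) * ∏ k ∈ Icc 1 n, |r - k|
        ≤ 2 ^ (⌊r⌋ + 1)) := by
  have abs_b (n : ℕ) : |b n| = |Ring.choose (r - 1) n| := by
    rw [hb, Ring.choose_sub_one_eq_prod_Icc, div_mul_eq_mul_div, mul_div_assoc, abs_mul,
      abs_neg_one_pow, one_mul]
  have abs_coeff (n : ℕ) :
      (1 / (n.factorial : ℝ)) * ∏ k ∈ Icc 1 n, |r - k| = |Ring.choose (r - 1) n| := by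
    rw [Ring.choose_sub_one_eq_prod_Icc, abs_div, Nat.abs_cast, abs_prod, one_div_mul_eq_div]
  have bound : ∑ n ∈ range (N + 1), |Ring.choose (r - 1) n| ≤ 2 ^ (⌊r⌋ + 1) := by
    rw [← Int.natCast_floor_eq_floor (by linarith), ← Nat.cast_succ, zpow_natCast]
    exact sum_range_abs_choose_le_two_pow (by linarith)
      (by linarith [Nat.lt_floor_add_one r]) (N + 1)
  simp only [abs_b, abs_coeff]
  exact ⟨bound, bound⟩
end

section
/- Let r, t, λ, κ > 0 be real numbers and define h(σ) := (λ/(λ+σ))^t · σ^r for σ ∈ [0, κ]. Then: if r < t, for every σ ∈ [0, κ] one has h(σ) ≤ (r·λ/t)^r; and if r ≥ t, for every σ ∈ [0, κ] one has h(σ) ≤ (λ/(κ+λ))^t · κ^r. -/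
/-- **Bound on the residual of the iterated Tikhonov spectral function** (paper's Lemma):
for `r, t, λ, κ > 0` and `h σ = (λ/(λ+σ))^t · σ^r` on `[0, κ]`, if `r < t` then
`h σ ≤ (r·λ/t)^r`, and if `r ≥ t` then `h σ ≤ (λ/(κ+λ))^t · κ^r`. -/
theorem it_spectral_residual_bound
    (r t lam κ : ℝ) (hr : 0 < r) (ht : 0 < t) (hlam : 0 < lam) (hκ : 0 < κ)
    (σ : ℝ) (hσ : σ ∈ Set.Icc (0 : ℝ) κ) :
    (r < t → (lam / (lam + σ)) ^ t * σ ^ r ≤ (r * lam / t) ^ r) ∧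
      (t ≤ r → (lam / (lam + σ)) ^ t * σ ^ r ≤ (lam / (κ + lam)) ^ t * κ ^ r) := by
  obtain ⟨hσ0, hσκ⟩ := hσ
  have hA : 0 < lam + σ := by linarith
  constructor
  · intro hrt
    -- Bernoulli's inequality
    have hb : 1 + (t / r) * (σ / lam) ≤ (1 + σ / lam) ^ (t / r) :=
      one_add_mul_self_le_rpow_one_add (by have := div_nonneg hσ0 hlam.le; linarith)
        ((one_le_div hr).mpr hrt.le)
    have hb2 : (t / r) * (σ / lam) ≤ (1 + σ / lam) ^ (t / r) := by
      nlinarith [hb]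
    have h2 : ((t / r) * (σ / lam)) ^ r ≤ ((1 + σ / lam) ^ (t / r)) ^ r :=
      Real.rpow_le_rpow (by positivity) hb2 hr.le
    have h3 : ((1 + σ / lam) ^ (t / r)) ^ r = ((lam + σ) / lam) ^ t := by
      rw [← Real.rpow_mul (by positivity), div_mul_cancel₀ _ hr.ne']
      congr 1
      field_simp
    have h4 : (t / r) * (σ / lam) = (r * lam / t)⁻¹ * σ := by
      field_simp
    have key : σ ^ r ≤ (r * lam / t) ^ r * ((lam + σ) / lam) ^ t := by
      rw [h3, h4] at h2
      rw [Real.mul_rpow (by positivity) hσ0, Real.inv_rpow (by positivity)] at h2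
      have hrl : 0 < (r * lam / t) ^ r := by positivity
      calc σ ^ r = (r * lam / t) ^ r * (((r * lam / t) ^ r)⁻¹ * σ ^ r) := by
            field_simp
        _ ≤ (r * lam / t) ^ r * ((lam + σ) / lam) ^ t := by
            exact mul_le_mul_of_nonneg_left h2 hrl.le
    calc (lam / (lam + σ)) ^ t * σ ^ r
        ≤ (lam / (lam + σ)) ^ t * ((r * lam / t) ^ r * ((lam + σ) / lam) ^ t) :=
          mul_le_mul_of_nonneg_left key (by positivity)
      _ = (r * lam / t) ^ r * ((lam / (lam + σ)) ^ t * ((lam + σ) / lam) ^ t) := by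
          ring
      _ = (r * lam / t) ^ r := by
          rw [← Real.mul_rpow (by positivity) (by positivity)]
          rw [div_mul_div_comm, mul_comm lam (lam + σ), div_self (by positivity), Real.one_rpow, mul_one]
  · intro htr
    rcases eq_or_lt_of_le hσ0 with h0 | hσpos
    · rw [← h0]
      have : ((0 : ℝ)) ^ r = 0 := Real.zero_rpow hr.ne'
      rw [this, mul_zero]
      positivity
    · have hEq : ∀ x : ℝ, 0 < x →
          (lam / (lam + x)) ^ t * x ^ r = lam ^ t * x ^ (r - t) * (x / (lam + x)) ^ t := by
        intro x hx
        have hAx : 0 < lam + x := by linarith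
        rw [Real.div_rpow hlam.le hAx.le, Real.div_rpow hx.le hAx.le,
          show r = (r - t) + t by ring, Real.rpow_add hx]
        field_simp
        ring
      rw [hEq σ hσpos, show κ + lam = lam + κ by ring, hEq κ hκ]
      have h1 : σ ^ (r - t) ≤ κ ^ (r - t) :=
        Real.rpow_le_rpow hσ0 hσκ (by linarith)
      have h2 : σ / (lam + σ) ≤ κ / (lam + κ) := by
        rw [div_le_div_iff₀ hA (by linarith)]
        nlinarith
      have h3 : (σ / (lam + σ)) ^ t ≤ (κ / (lam + κ)) ^ t :=
        Real.rpow_le_rpow (by positivity) h2 ht.le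
      have hlt : (0:ℝ) ≤ lam ^ t := by positivity
      calc lam ^ t * σ ^ (r - t) * (σ / (lam + σ)) ^ t
          ≤ lam ^ t * κ ^ (r - t) * (σ / (lam + σ)) ^ t := by
            apply mul_le_mul_of_nonneg_right _ (by positivity)
            exact mul_le_mul_of_nonneg_left h1 hlt
        _ ≤ lam ^ t * κ ^ (r - t) * (κ / (lam + κ)) ^ t :=
            mul_le_mul_of_nonneg_left h3 (by positivity)
end

section
/- Let t ≥ 1 be a natural number, C := 4·log 2 − 2, and let B > 0 satisfy B·e ≤ 1/2 and B·e ≤ 1/(C·t). Let a_1, …, a_t be real numbers such that for every k ∈ {1, …, t}: a_k ≥ 1 and a_k ≤ −log(1 − X_{k−1})/X_{k−1}, where X_{k−1} := B·∏_{i=1}^{k−1} a_i. Then X_{k−1} ≤ 1/2 for all k ∈ {1, …, t}, each a_k ≤ 1 + 1/t, and ∏_{k=1}^{t} a_k ≤ e. -/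
open Finset Real

/-!
Since `-log (1 - x) - x = ∑_{n ≥ 2} xⁿ / n` has nonnegative coefficients, `(-log (1 - x) - x) / x²`
is increasing on `[0, 1)`; on `(0, 1/2]` it is therefore at most its value `C = 4 log 2 - 2` at `1/2`,
i.e. `-log (1 - x) / x ≤ 1 + C x`. Then by induction on `k`: if `a₁ ⋯ a_{k-1} ≤ (1 + 1/t)^(k-1) ≤ e`,
then `X_{k-1} ≤ B e ≤ 1/2` and `a_k ≤ 1 + C X_{k-1} ≤ 1 + C B e ≤ 1 + 1/t`.
-/

theorem hasSum_pow_div_neg_log_one_sub_sub {x : ℝ} (h : |x| < 1) :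
    HasSum (fun n : ℕ => x ^ (n + 2) / (n + 2)) (-log (1 - x) - x) := by
  simpa [add_assoc, one_add_one_eq_two] using
    (hasSum_nat_add_iff' 1).2 (hasSum_pow_div_log_of_abs_lt_one h)

theorem sq_mul_neg_log_one_sub_sub_le {x r : ℝ} (hx : 0 ≤ x) (hxr : x ≤ r) (hr : r < 1) :
    r ^ 2 * (-log (1 - x) - x) ≤ x ^ 2 * (-log (1 - r) - r) := by
  have hx1 : |x| < 1 := by rw [abs_of_nonneg hx]; linarith
  have hr1 : |r| < 1 := by rw [abs_of_nonneg (hx.trans hxr)]; exact hr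
  refine hasSum_le (fun n => ?_) ((hasSum_pow_div_neg_log_one_sub_sub hx1).mul_left _)
    ((hasSum_pow_div_neg_log_one_sub_sub hr1).mul_left _)
  have hterm : r ^ 2 * x ^ (n + 2) ≤ x ^ 2 * r ^ (n + 2) :=
    calc r ^ 2 * x ^ (n + 2) = x ^ 2 * (r ^ 2 * x ^ n) := by ring
      _ ≤ x ^ 2 * (r ^ 2 * r ^ n) := by gcongr
      _ = x ^ 2 * r ^ (n + 2) := by ring
  simp only [mul_div_assoc']
  gcongr

theorem four_mul_log_two_sub_two_pos : 0 < 4 * log 2 - 2 := by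
  linarith [log_two_gt_d9]

theorem neg_log_one_sub_div_le {x : ℝ} (hx : 0 < x) (hx2 : x ≤ 1 / 2) :
    -log (1 - x) / x ≤ 1 + (4 * log 2 - 2) * x := by
  have h := sq_mul_neg_log_one_sub_sub_le hx.le hx2 (by norm_num)
  rw [show (1 : ℝ) - 1 / 2 = 2⁻¹ by norm_num, log_inv, neg_neg] at h
  rw [div_le_iff₀ hx]
  nlinarith

theorem neg_log_one_sub_div_le_one_add_one_div {x y t : ℝ} (hx : 0 < x) (hxy : x ≤ y)
    (hy : y ≤ 1 / 2) (hyt : y ≤ 1 / ((4 * log 2 - 2) * t)) :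
    -log (1 - x) / x ≤ 1 + 1 / t := by
  have hC := four_mul_log_two_sub_two_pos
  have hCt : 0 < (4 * log 2 - 2) * t := one_div_pos.1 (hx.trans_le (hxy.trans hyt))
  calc -log (1 - x) / x ≤ 1 + (4 * log 2 - 2) * x := neg_log_one_sub_div_le hx (hxy.trans hy)
    _ ≤ 1 + (4 * log 2 - 2) * (1 / ((4 * log 2 - 2) * t)) := by gcongr; exact hxy.trans hyt
    _ = 1 + 1 / t := by field_simp

theorem one_add_one_div_pow_le_exp_one {m t : ℕ} (hm : m ≤ t) :
    (1 + 1 / (t : ℝ)) ^ m ≤ exp 1 := by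
  calc (1 + 1 / (t : ℝ)) ^ m ≤ (1 + 1 / (t : ℝ)) ^ t :=
        pow_le_pow_right₀ (le_add_of_nonneg_right (by positivity)) hm
    _ ≤ exp 1 := by simpa only [one_div] using one_add_inv_pow_le_exp (n := t)

theorem prefactor_le_one_add_one_div {t k : ℕ} {B : ℝ} {a X : ℕ → ℝ} (hB : 0 < B)
    (hBe1 : B * exp 1 ≤ 1 / 2) (hBe2 : B * exp 1 ≤ 1 / ((4 * log 2 - 2) * t))
    (hX : ∀ m, X m = B * ∏ i ∈ Icc 1 m, a i)
    (ha1 : ∀ k, 1 ≤ k → k ≤ t → 1 ≤ a k)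
    (ha2 : ∀ k, 1 ≤ k → k ≤ t → a k ≤ -log (1 - X (k - 1)) / X (k - 1))
    (hk1 : 1 ≤ k) (hkt : k ≤ t) (hprod : ∏ i ∈ Icc 1 (k - 1), a i ≤ exp 1) :
    a k ≤ 1 + 1 / t := by
  have hX_pos : 0 < X (k - 1) := by
    rw [hX]
    refine mul_pos hB (one_pos.trans_le (one_le_prod fun i hi => ?_))
    obtain ⟨hi1, hik⟩ := mem_Icc.1 hi
    exact ha1 i hi1 (by omega)
  have hX_le : X (k - 1) ≤ B * exp 1 := by
    rw [hX]
    gcongr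
  exact (ha2 k hk1 hkt).trans
    (neg_log_one_sub_div_le_one_add_one_div hX_pos hX_le hBe1 hBe2)

theorem prod_Icc_le_one_add_one_div_pow {t : ℕ} {B : ℝ} {a X : ℕ → ℝ} (hB : 0 < B)
    (hBe1 : B * exp 1 ≤ 1 / 2) (hBe2 : B * exp 1 ≤ 1 / ((4 * log 2 - 2) * t))
    (hX : ∀ m, X m = B * ∏ i ∈ Icc 1 m, a i)
    (ha1 : ∀ k, 1 ≤ k → k ≤ t → 1 ≤ a k)
    (ha2 : ∀ k, 1 ≤ k → k ≤ t → a k ≤ -log (1 - X (k - 1)) / X (k - 1)) :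
    ∀ m ≤ t, ∏ i ∈ Icc 1 m, a i ≤ (1 + 1 / (t : ℝ)) ^ m := by
  intro m
  induction m with
  | zero => simp
  | succ m ih =>
    intro hm
    have hprod := ih (by omega)
    have ham : a (m + 1) ≤ 1 + 1 / t :=
      prefactor_le_one_add_one_div hB hBe1 hBe2 hX ha1 ha2 (by omega) hm
        (hprod.trans (one_add_one_div_pow_le_exp_one (by omega)))
    rw [prod_Icc_succ_top (by omega), pow_succ]
    have ha_nonneg : 0 ≤ a (m + 1) := zero_le_one.trans (ha1 (m + 1) (by omega) hm)
    gcongr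

theorem constant_prefactor_variance_general
    (t : ℕ) (B : ℝ) (hB : 0 < B)
    (hBe1 : B * Real.exp 1 ≤ 1 / 2)
    (hBe2 : B * Real.exp 1 ≤ 1 / ((4 * Real.log 2 - 2) * t))
    (a : ℕ → ℝ) (X : ℕ → ℝ)
    (hX : ∀ m, X m = B * ∏ i ∈ Icc 1 m, a i)
    (ha1 : ∀ k, 1 ≤ k → k ≤ t → 1 ≤ a k)
    (ha2 : ∀ k, 1 ≤ k → k ≤ t → a k ≤ -Real.log (1 - X (k - 1)) / X (k - 1)) :
    (∀ k, 1 ≤ k → k ≤ t → X (k - 1) ≤ 1 / 2) ∧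
      (∀ k, 1 ≤ k → k ≤ t → a k ≤ 1 + 1 / t) ∧
      ∏ k ∈ Icc 1 t, a k ≤ Real.exp 1 := by
  have hprod : ∀ m ≤ t, ∏ i ∈ Icc 1 m, a i ≤ exp 1 := fun m hm =>
    (prod_Icc_le_one_add_one_div_pow hB hBe1 hBe2 hX ha1 ha2 m hm).trans
      (one_add_one_div_pow_le_exp_one hm)
  refine ⟨fun k _ hkt => ?_, fun k hk1 hkt =>
    prefactor_le_one_add_one_div hB hBe1 hBe2 hX ha1 ha2 hk1 hkt (hprod _ (by omega)),
    hprod t le_rfl⟩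
  calc X (k - 1) = B * ∏ i ∈ Icc 1 (k - 1), a i := hX _
    _ ≤ B * exp 1 := by gcongr; exact hprod _ (by omega)
    _ ≤ 1 / 2 := hBe1

/-- **Inductive recursion for the constant prefactor of the variance** (paper's
Proposition): with `C = 4·log 2 − 2`, `B > 0`, `B·e ≤ 1/2`, `B·e ≤ 1/(C·t)`, and
per-step prefactors `a_k ≥ 1` satisfying `a_k ≤ −log(1 − X_{k−1})/X_{k−1}` where
`X_m = B·∏_{i=1}^m a_i`, one has `X_{k−1} ≤ 1/2` for all `k ∈ {1, …, t}`, each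
`a_k ≤ 1 + 1/t`, and `∏_{k=1}^t a_k ≤ e`. -/
theorem constant_prefactor_variance
    (t : ℕ) (ht : 1 ≤ t) (B : ℝ) (hB : 0 < B)
    (hBe1 : B * Real.exp 1 ≤ 1 / 2)
    (hBe2 : B * Real.exp 1 ≤ 1 / ((4 * Real.log 2 - 2) * t))
    (a : ℕ → ℝ) (X : ℕ → ℝ)
    (hX : ∀ m, X m = B * ∏ i ∈ Icc 1 m, a i)
    (ha1 : ∀ k, 1 ≤ k → k ≤ t → 1 ≤ a k)
    (ha2 : ∀ k, 1 ≤ k → k ≤ t → a k ≤ -Real.log (1 - X (k - 1)) / X (k - 1)) :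
    (∀ k, 1 ≤ k → k ≤ t → X (k - 1) ≤ 1 / 2) ∧
      (∀ k, 1 ≤ k → k ≤ t → a k ≤ 1 + 1 / t) ∧
      ∏ k ∈ Icc 1 t, a k ≤ Real.exp 1 :=
  constant_prefactor_variance_general t B hB hBe1 hBe2 a X hX ha1 ha2
end

section
/- Let Ĥ be a nonnegative selfadjoint bounded linear operator on a complex Hilbert space with ‖Ĥ‖ ≤ B for some B > 0, let λ > 0, let t ≥ 1 be a natural number and r > 0 a real number, and let Ĥ^r denote the fractional power defined via the continuous functional calculus. Then Ĥ + λI is invertible and: if r < t, ‖λ^t · ((Ĥ + λI)^{-1})^t · Ĥ^r‖ ≤ (r·λ/t)^r; and if r ≥ t, ‖λ^t · ((Ĥ + λI)^{-1})^t · Ĥ^r‖ ≤ (λ/(B+λ))^t · B^r. -/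
/-!
Under the continuous functional calculus, `λ^t (Ĥ + λ)⁻ᵗ Ĥ^r = f(Ĥ)` with
`f(σ) = (λ / (σ + λ))^t σ^r`, and `‖f(Ĥ)‖` is at most the supremum of `|f|` on the spectrum,
which lies in `[0, ‖Ĥ‖] ⊆ [0, B]`. For `r < t`, Bernoulli's inequality
`(1 + σ/λ)^(t/r) ≥ (t/r)(σ/λ)` gives `σ^r ≤ (rλ/t)^r ((σ + λ)/λ)^t`. For `t ≤ r`,
`f(σ) = (λσ / (σ + λ))^t σ^(r-t)` is a product of nondecreasing functions, hence largest at `σ = B`.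
-/

namespace Real

variable {x lam r : ℝ} {t : ℕ}

theorem div_add_pow_mul_rpow_le_of_lt (hx : 0 ≤ x) (hlam : 0 < lam) (hr : 0 < r)
    (hrt : r < t) : (lam / (x + lam)) ^ t * x ^ r ≤ (r * lam / t) ^ r := by
  have ht : (0 : ℝ) < t := hr.trans hrt
  have bernoulli : t / r * (x / lam) ≤ (1 + x / lam) ^ (t / r) :=
    (le_add_of_nonneg_left zero_le_one).trans <| one_add_mul_self_le_rpow_one_add
      (by linarith [div_nonneg hx hlam.le]) ((one_le_div hr).mpr hrt.le)
  have key : x ^ r ≤ (r * lam / t) ^ r * ((x + lam) / lam) ^ t :=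
    calc x ^ r = (r * lam / t) ^ r * (t / r * (x / lam)) ^ r := by
          rw [← mul_rpow (by positivity) (by positivity)]
          field_simp
      _ ≤ (r * lam / t) ^ r * ((1 + x / lam) ^ (t / r)) ^ r := by gcongr
      _ = (r * lam / t) ^ r * ((x + lam) / lam) ^ t := by
          rw [← rpow_mul (by positivity), div_mul_cancel₀ _ hr.ne', rpow_natCast, add_div,
            div_self hlam.ne', add_comm]
  calc (lam / (x + lam)) ^ t * x ^ r
      ≤ (lam / (x + lam)) ^ t * ((r * lam / t) ^ r * ((x + lam) / lam) ^ t) := by gcongr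
    _ = (r * lam / t) ^ r := by
        rw [mul_left_comm, ← mul_pow, div_mul_div_cancel₀ (by positivity), div_self hlam.ne',
          one_pow, mul_one]

theorem div_add_pow_mul_rpow_le_of_le {B : ℝ} (hx : 0 ≤ x) (hxB : x ≤ B) (hlam : 0 < lam)
    (hr : 0 < r) (htr : t ≤ r) :
    (lam / (x + lam)) ^ t * x ^ r ≤ (lam / (B + lam)) ^ t * B ^ r := by
  have hB : 0 ≤ B := hx.trans hxB
  have split (y : ℝ) (hy : 0 ≤ y) : y ^ r = y ^ (r - t) * y ^ t := by
    rw [← rpow_add_natCast' hy (by simpa using hr.ne'), sub_add_cancel]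
  have cross : x ^ r * (B + lam) ^ t ≤ B ^ r * (x + lam) ^ t :=
    calc x ^ r * (B + lam) ^ t = x ^ (r - t) * (x * (B + lam)) ^ t := by
          rw [split x hx, mul_pow]; ring
      _ ≤ B ^ (r - t) * (B * (x + lam)) ^ t := by
          have hprod : x * (B + lam) ≤ B * (x + lam) := by nlinarith
          gcongr ?_ * ?_ ^ _
          exact rpow_le_rpow hx hxB (sub_nonneg.mpr htr)
      _ = B ^ r * (x + lam) ^ t := by
          rw [split B hB, mul_pow]; ring
  rw [div_pow, div_pow, div_mul_eq_mul_div, div_mul_eq_mul_div,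
    div_le_div_iff₀ (by positivity) (by positivity)]
  simpa only [mul_assoc] using mul_le_mul_of_nonneg_left cross (by positivity : 0 ≤ lam ^ t)

end Real

section CStarAlgebra

variable {A : Type*} [CStarAlgebra A] {a : A} {lam r : ℝ} {t : ℕ}

lemma add_algebraMap_eq_cfc (ha : IsSelfAdjoint a) (lam : ℝ) :
    a + algebraMap ℝ A lam = cfc (fun x : ℝ => x + lam) a := by
  rw [cfc_add_const lam (fun x : ℝ => x) a, cfc_id' ℝ a]

variable [PartialOrder A] [StarOrderedRing A]

lemma spectrum_subset_Icc_norm_of_nonneg (ha : 0 ≤ a) : spectrum ℝ a ⊆ Set.Icc 0 ‖a‖ := by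
  intro x hx
  cases subsingleton_or_nontrivial A
  · simp [spectrum.of_subsingleton] at hx
  exact ⟨spectrum_nonneg_of_nonneg ha hx,
    (Real.le_norm_self x).trans (spectrum.norm_le_norm_of_mem hx)⟩

lemma isUnit_add_algebraMap_of_nonneg (ha : 0 ≤ a) (hlam : 0 < lam) :
    IsUnit (a + algebraMap ℝ A lam) := by
  rw [add_algebraMap_eq_cfc ha.isSelfAdjoint, isUnit_cfc_iff _ a]
  intro x hx
  have := spectrum_nonneg_of_nonneg ha hx
  positivity

lemma ringInverse_add_algebraMap_eq_cfc (ha : 0 ≤ a) (hlam : 0 < lam) :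
    Ring.inverse (a + algebraMap ℝ A lam) = cfc (fun x : ℝ => (x + lam)⁻¹) a := by
  rw [add_algebraMap_eq_cfc ha.isSelfAdjoint, cfc_inv _ a]
  intro x hx
  have := spectrum_nonneg_of_nonneg ha hx
  positivity

lemma smul_ringInverse_add_algebraMap_pow_mul_rpow_eq_cfc (ha : 0 ≤ a) (hlam : 0 < lam)
    (t : ℕ) (hr : 0 ≤ r) :
    lam ^ t • (Ring.inverse (a + algebraMap ℝ A lam) ^ t * a ^ r) =
      cfc (fun x : ℝ => (lam / (x + lam)) ^ t * x ^ r) a := by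
  -- picked up by `cfc_cont_tac` in the rewrites below
  have hcont : ContinuousOn (fun x : ℝ => (x + lam)⁻¹) (spectrum ℝ a) := by
    refine ContinuousOn.inv₀ (by fun_prop) fun x hx => ?_
    have := spectrum_nonneg_of_nonneg ha hx
    positivity
  rw [ringInverse_add_algebraMap_eq_cfc ha hlam, ← cfc_pow _ t a, CFC.rpow_eq_cfc_real ha,
    ← cfc_mul _ _ a, ← cfc_smul (lam ^ t) (fun x : ℝ => (x + lam)⁻¹ ^ t * x ^ r) a]
  refine cfc_congr fun x _ => ?_
  rw [smul_eq_mul]; ring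

theorem norm_smul_ringInverse_add_algebraMap_pow_mul_rpow_le_of_lt (ha : 0 ≤ a)
    (hlam : 0 < lam) (hr : 0 < r) (hrt : r < t) :
    ‖lam ^ t • (Ring.inverse (a + algebraMap ℝ A lam) ^ t * a ^ r)‖ ≤ (r * lam / t) ^ r := by
  rw [smul_ringInverse_add_algebraMap_pow_mul_rpow_eq_cfc ha hlam t hr.le]
  refine norm_cfc_le (by positivity) fun x hx => ?_
  have hx0 := (spectrum_subset_Icc_norm_of_nonneg ha hx).1
  rw [Real.norm_of_nonneg (by positivity)]
  exact Real.div_add_pow_mul_rpow_le_of_lt hx0 hlam hr hrt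

theorem norm_smul_ringInverse_add_algebraMap_pow_mul_rpow_le_of_le {B : ℝ} (ha : 0 ≤ a)
    (haB : ‖a‖ ≤ B) (hlam : 0 < lam) (hr : 0 < r) (htr : t ≤ r) :
    ‖lam ^ t • (Ring.inverse (a + algebraMap ℝ A lam) ^ t * a ^ r)‖ ≤
      (lam / (B + lam)) ^ t * B ^ r := by
  rw [smul_ringInverse_add_algebraMap_pow_mul_rpow_eq_cfc ha hlam t hr.le]
  have hB : 0 ≤ B := (norm_nonneg a).trans haB
  refine norm_cfc_le (by positivity) fun x hx => ?_
  obtain ⟨hx0, hxa⟩ := spectrum_subset_Icc_norm_of_nonneg ha hx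
  rw [Real.norm_of_nonneg (by positivity)]
  exact Real.div_add_pow_mul_rpow_le_of_le hx0 (hxa.trans haB) hlam hr htr

end CStarAlgebra

theorem it_residual_operator_norm_bound_general
    {H : Type*} [NormedAddCommGroup H] [InnerProductSpace ℂ H] [CompleteSpace H]
    (Hop : H →L[ℂ] H) (h0 : 0 ≤ Hop)
    (B : ℝ) (hnorm : ‖Hop‖ ≤ B)
    (lam : ℝ) (hlam : 0 < lam) (t : ℕ) (r : ℝ) (hr : 0 < r) :
    IsUnit (Hop + (lam : ℂ) • (1 : H →L[ℂ] H)) ∧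
      (r < t →
        ‖lam ^ t • ((Ring.inverse (Hop + (lam : ℂ) • (1 : H →L[ℂ] H))) ^ t
            * CFC.rpow Hop r)‖ ≤ (r * lam / t) ^ r) ∧
      ((t : ℝ) ≤ r →
        ‖lam ^ t • ((Ring.inverse (Hop + (lam : ℂ) • (1 : H →L[ℂ] H))) ^ t
            * CFC.rpow Hop r)‖ ≤ (lam / (B + lam)) ^ t * B ^ r) := by
  have halg : (lam : ℂ) • (1 : H →L[ℂ] H) = algebraMap ℝ (H →L[ℂ] H) lam := by
    rw [Algebra.algebraMap_eq_smul_one, Complex.coe_smul]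
  rw [halg]
  exact ⟨isUnit_add_algebraMap_of_nonneg h0 hlam,
    norm_smul_ringInverse_add_algebraMap_pow_mul_rpow_le_of_lt h0 hlam hr,
    norm_smul_ringInverse_add_algebraMap_pow_mul_rpow_le_of_le h0 hnorm hlam hr⟩

/-- **Operator-norm bound on the iterated Tikhonov residual under a source condition**
(spectral-calculus form of the paper's calculus Lemma): for a nonnegative selfadjoint
bounded operator `Ĥ` with `‖Ĥ‖ ≤ B`, `λ > 0`, `t ≥ 1` and `r > 0`, the operator `Ĥ + λI`
is invertible and `‖λ^t·((Ĥ + λI)⁻¹)^t·Ĥ^r‖ ≤ (r·λ/t)^r` if `r < t`, while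
`‖λ^t·((Ĥ + λI)⁻¹)^t·Ĥ^r‖ ≤ (λ/(B+λ))^t·B^r` if `r ≥ t`. -/
theorem it_residual_operator_norm_bound
    {H : Type*} [NormedAddCommGroup H] [InnerProductSpace ℂ H] [CompleteSpace H]
    (Hop : H →L[ℂ] H) (hsa : IsSelfAdjoint Hop) (h0 : 0 ≤ Hop)
    (B : ℝ) (hB : 0 < B) (hnorm : ‖Hop‖ ≤ B)
    (lam : ℝ) (hlam : 0 < lam) (t : ℕ) (ht : 1 ≤ t) (r : ℝ) (hr : 0 < r) :
    IsUnit (Hop + (lam : ℂ) • (1 : H →L[ℂ] H)) ∧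
      (r < t →
        ‖lam ^ t • ((Ring.inverse (Hop + (lam : ℂ) • (1 : H →L[ℂ] H))) ^ t
            * CFC.rpow Hop r)‖ ≤ (r * lam / t) ^ r) ∧
      ((t : ℝ) ≤ r →
        ‖lam ^ t • ((Ring.inverse (Hop + (lam : ℂ) • (1 : H →L[ℂ] H))) ^ t
            * CFC.rpow Hop r)‖ ≤ (lam / (B + lam)) ^ t * B ^ r) :=
  it_residual_operator_norm_bound_general Hop h0 B hnorm lam hlam t r hr
end
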